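/- arXiv:1802.04569 — 5 statements merged into one kernel-verified Lean document; each statement's English description precedes it below -/
import Mathlib

section
/- With Δ the matrix Δ_{nk} = (−1)^{k−1}·binom(n−1,k−1) (for k ≤ n, zero otherwise) acting on ℂ^ℕ, the Cesàro operator satisfies C = Δ ∘ diag(1/n) ∘ Δ, where diag(1/n) is the diagonal operator (x_n) ↦ (x_n/n). Consequently, for each m ≥ 1, C(Δe_m) = (1/m)·Δe_m, where e_m is the m-th standard basis vector. -/
/-- The Cesàro operator on ℂ^ℕ (0-indexed). -/
noncomputable def cesaroOp (x : ℕ → ℂ) (n : ℕ) : ℂ :=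
  (∑ i ∈ Finset.range (n + 1), x i) / (n + 1)

/-- The operator Δ (0-indexed). -/
noncomputable def deltaOp (x : ℕ → ℂ) (n : ℕ) : ℂ :=
  ∑ k ∈ Finset.range (n + 1), (-1 : ℂ) ^ k * (n.choose k : ℂ) * x k

/-- The diagonal operator diag(1/n) (0-indexed: (x_n) ↦ (x_n/(n+1))). -/
noncomputable def diagOp (x : ℕ → ℂ) (n : ℕ) : ℂ := x n / ((n : ℂ) + 1)

/-!
Δ is an involution (binomial inversion), so `C = ΔDΔ` amounts to `ΔC = DΔ`. Both sides are
lower triangular, and after `(n+1)·C(n,k) = (k+1)·C(n+1,k+1)` the `(n, j)` entry of `ΔC` becomes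
`(n+1)⁻¹ ∑_{k=j}^{n} (-1)^k C(n+1,k+1)`, a partial alternating row sum which telescopes by Pascal's
rule to `(-1)^j C(n,j)/(n+1)`, the `(n, j)` entry of `DΔ`. Then `C(Δe_m) = ΔD(ΔΔe_m) = ΔDe_m`.
-/

open Finset

theorem Finset.sum_range_sum_range_succ_comm {M : Type*} [AddCommMonoid M] (n : ℕ)
    (f : ℕ → ℕ → M) :
    ∑ k ∈ range (n + 1), ∑ j ∈ range (k + 1), f k j =
      ∑ j ∈ range (n + 1), ∑ k ∈ Ico j (n + 1), f k j := by
  simpa only [range_eq_Ico] using (sum_Ico_Ico_comm 0 (n + 1) fun j k ↦ f k j).symm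

section Binomial

variable {R : Type*} [CommRing R]

theorem sum_range_neg_one_pow_mul_choose (n : ℕ) :
    ∑ i ∈ range (n + 1), (-1 : R) ^ i * n.choose i = if n = 0 then 1 else 0 := by
  have := (Commute.all (-1 : R) 1).add_pow n
  simp only [neg_add_cancel, one_pow, mul_one] at this
  rw [← this, zero_pow_eq]

theorem sum_range_neg_one_pow_mul_choose_succ (n m : ℕ) :
    ∑ k ∈ range m, (-1 : R) ^ k * ((n + 1).choose (k + 1) : R) =
      1 - (-1) ^ m * n.choose m := by
  induction m with
  | zero => simp
  | succ m ih =>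
    rw [sum_range_succ, ih, Nat.choose_succ_succ', pow_succ]
    push_cast
    ring

theorem sum_Ico_neg_one_pow_mul_choose_succ {n j : ℕ} (hj : j ≤ n + 1) :
    ∑ k ∈ Ico j (n + 1), (-1 : R) ^ k * ((n + 1).choose (k + 1) : R) =
      (-1) ^ j * n.choose j := by
  rw [sum_Ico_eq_sub _ hj, sum_range_neg_one_pow_mul_choose_succ,
    sum_range_neg_one_pow_mul_choose_succ, Nat.choose_succ_self]
  push_cast
  ring

theorem sum_Ico_neg_one_pow_mul_choose_mul_choose {n j : ℕ} (hj : j ≤ n) :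
    ∑ k ∈ Ico j (n + 1), (-1 : R) ^ k * n.choose k * (-1) ^ j * k.choose j =
      if j = n then 1 else 0 := by
  have hterm (i : ℕ) : (-1 : R) ^ (j + i) * n.choose (j + i) * (-1) ^ j * (j + i).choose j =
      n.choose j * ((-1) ^ i * (n - j).choose i) := by
    have h := Nat.choose_mul (n := n) (k := j + i) (Nat.le_add_right j i)
    rw [Nat.add_sub_cancel_left] at h
    have hcast : (n.choose (j + i) : R) * (j + i).choose j = n.choose j * (n - j).choose i := by
      rw [← Nat.cast_mul, ← Nat.cast_mul, h]
    have hsq : (-1 : R) ^ j * (-1) ^ j = 1 := by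
      rw [← pow_add, ← two_mul, pow_mul, neg_one_sq, one_pow]
    rw [pow_add]
    linear_combination (-1 : R) ^ i * hcast +
      (-1 : R) ^ i * n.choose (j + i) * (j + i).choose j * hsq
  rw [sum_Ico_eq_sum_range, show n + 1 - j = n - j + 1 by omega]
  simp_rw [hterm, ← mul_sum, sum_range_neg_one_pow_mul_choose]
  rcases hj.eq_or_lt with rfl | hlt
  · simp
  · simp [Nat.sub_ne_zero_of_lt hlt, hlt.ne]

end Binomial

theorem sum_Ico_neg_one_pow_mul_choose_div_succ {K : Type*} [Field K] [CharZero K] {n j : ℕ}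
    (hj : j ≤ n) :
    ∑ k ∈ Ico j (n + 1), (-1 : K) ^ k * n.choose k / (k + 1) = (-1) ^ j * n.choose j / (n + 1) := by
  have hterm (k : ℕ) : (-1 : K) ^ k * n.choose k / (k + 1) =
      (-1) ^ k * ((n + 1).choose (k + 1) : K) / (n + 1) := by
    have h := congrArg (Nat.cast (R := K)) (Nat.add_one_mul_choose_eq n k)
    push_cast at h
    rw [div_eq_div_iff (Nat.cast_add_one_ne_zero k) (Nat.cast_add_one_ne_zero n)]
    linear_combination (-1 : K) ^ k * h
  simp_rw [hterm, ← sum_div, sum_Ico_neg_one_pow_mul_choose_succ (by omega : j ≤ n + 1)]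

lemma deltaOp_deltaOp (x : ℕ → ℂ) : deltaOp (deltaOp x) = x := by
  funext n
  simp only [deltaOp, mul_sum]
  rw [sum_range_sum_range_succ_comm]
  simp_rw [← mul_assoc, ← sum_mul]
  calc _ = ∑ j ∈ range (n + 1), if j = n then x j else 0 := sum_congr rfl fun j hj ↦ by
        rw [sum_Ico_neg_one_pow_mul_choose_mul_choose (mem_range_succ_iff.mp hj), ite_mul,
          one_mul, zero_mul]
    _ = x n := by simp

lemma deltaOp_cesaroOp (x : ℕ → ℂ) : deltaOp (cesaroOp x) = diagOp (deltaOp x) := by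
  funext n
  simp only [deltaOp, cesaroOp, diagOp, sum_div, mul_sum]
  rw [sum_range_sum_range_succ_comm]
  refine sum_congr rfl fun j hj ↦ ?_
  calc ∑ k ∈ Ico j (n + 1), (-1 : ℂ) ^ k * n.choose k * (x j / (k + 1))
      = (∑ k ∈ Ico j (n + 1), (-1 : ℂ) ^ k * n.choose k / (k + 1)) * x j := by
        rw [sum_mul]
        exact sum_congr rfl fun k _ ↦ by ring
    _ = (-1) ^ j * n.choose j * x j / (n + 1) := by
        rw [sum_Ico_neg_one_pow_mul_choose_div_succ (mem_range_succ_iff.mp hj)]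
        ring

lemma cesaroOp_eq_deltaOp_diagOp_deltaOp (x : ℕ → ℂ) :
    cesaroOp x = deltaOp (diagOp (deltaOp x)) := by
  rw [← deltaOp_cesaroOp, deltaOp_deltaOp]

lemma deltaOp_smul (c : ℂ) (x : ℕ → ℂ) : deltaOp (c • x) = c • deltaOp x := by
  funext n
  simp only [deltaOp, Pi.smul_apply, smul_eq_mul, mul_sum]
  exact sum_congr rfl fun k _ ↦ by ring

lemma diagOp_single (m : ℕ) :
    diagOp (Pi.single m 1) = (1 / ((m : ℂ) + 1)) • (Pi.single m 1 : ℕ → ℂ) := by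
  funext n
  rcases eq_or_ne n m with rfl | h
  · simp [diagOp]
  · simp [diagOp, Pi.single_eq_of_ne h]

/-- C = Δ ∘ diag(1/n) ∘ Δ, and hence C(Δe_m) = (1/m)·Δe_m. -/
theorem stmt6 :
    (∀ x : ℕ → ℂ, cesaroOp x = deltaOp (diagOp (deltaOp x))) ∧
      (∀ m : ℕ, cesaroOp (deltaOp (Pi.single m 1)) =
        (1 / ((m : ℂ) + 1)) • deltaOp (Pi.single m 1)) := by
  refine ⟨cesaroOp_eq_deltaOp_diagOp_deltaOp, fun m ↦ ?_⟩
  rw [cesaroOp_eq_deltaOp_diagOp_deltaOp, deltaOp_deltaOp, diagOp_single, deltaOp_smul]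
end

section
/- The point spectrum of the Cesàro operator C acting on ℂ^ℕ is exactly {1/n : n ∈ ℕ, n ≥ 1}, and each eigenvalue 1/m has the eigenvector Δe_m, where Δ_{nk} = (−1)^{k−1} binom(n−1,k−1). -/
/-!
If `C x = λ x` and `m` is the first index with `x m ≠ 0`, then `(C x) m = x m / (m + 1)`, so
`λ = 1 / (m + 1)`. Conversely `Δ e_m` is the sequence `n ↦ (-1)^m (n choose m)`, and the
hockey-stick identity `∑_{i ≤ n} (i choose m) = (n + 1 choose m + 1) = (n + 1)/(m + 1) (n choose m)`
says exactly that it is an eigenvector for `1 / (m + 1)`.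
-/

open Finset

theorem Nat.sum_range_succ_choose (n m : ℕ) :
    ∑ i ∈ range (n + 1), i.choose m = (n + 1).choose (m + 1) := by
  rw [← Nat.sum_Icc_choose]
  refine (sum_subset (fun i hi => ?_) fun i hin him => ?_).symm
  · simp only [mem_Icc] at hi
    simpa using Nat.lt_succ_of_le hi.2
  · simp only [mem_range, mem_Icc, not_and, not_le] at hin him
    exact Nat.choose_eq_zero_of_lt (by omega)

theorem deltaOp_single_apply (m n : ℕ) :
    deltaOp (Pi.single m 1) n = (-1 : ℂ) ^ m * (n.choose m : ℂ) := by
  simp only [deltaOp, Pi.single_apply, mul_ite, mul_one, mul_zero, sum_ite_eq', mem_range]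
  split_ifs with h
  · rfl
  · simp [Nat.choose_eq_zero_of_lt (by omega : n < m)]

theorem deltaOp_single_ne_zero (m : ℕ) : deltaOp (Pi.single m 1) ≠ 0 := fun h => by
  simpa [deltaOp_single_apply] using congrFun h m

theorem cesaroOp_deltaOp_single (m : ℕ) :
    cesaroOp (deltaOp (Pi.single m 1)) = (1 / ((m : ℂ) + 1)) • deltaOp (Pi.single m 1) := by
  funext n
  have hpascal : ((n : ℂ) + 1) * n.choose m = (n + 1).choose (m + 1) * ((m : ℂ) + 1) := by
    exact_mod_cast Nat.add_one_mul_choose_eq n m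
  simp only [cesaroOp, deltaOp_single_apply, Pi.smul_apply, smul_eq_mul, ← mul_sum,
    ← Nat.cast_sum, Nat.sum_range_succ_choose]
  field_simp
  linear_combination hpascal.symm

theorem cesaroOp_apply_of_forall_lt_eq_zero {x : ℕ → ℂ} {m : ℕ} (hx : ∀ i < m, x i = 0) :
    cesaroOp x m = x m / ((m : ℂ) + 1) := by
  rw [cesaroOp, sum_range_succ, sum_eq_zero fun i hi => hx i (mem_range.mp hi), zero_add]

theorem exists_eq_one_div_of_cesaroOp_eq_smul {x : ℕ → ℂ} {lam : ℂ} (hx : x ≠ 0)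
    (hC : cesaroOp x = lam • x) : ∃ m : ℕ, lam = 1 / ((m : ℂ) + 1) := by
  have hex : ∃ m, x m ≠ 0 := Function.ne_iff.mp hx
  refine ⟨Nat.find hex, ?_⟩
  have hfirst : ∀ i < Nat.find hex, x i = 0 := fun i hi => not_not.mp (Nat.find_min hex hi)
  have hm := congrFun hC (Nat.find hex)
  rw [cesaroOp_apply_of_forall_lt_eq_zero hfirst, Pi.smul_apply, smul_eq_mul] at hm
  have hne : ((Nat.find hex : ℂ) + 1) ≠ 0 := Nat.cast_add_one_ne_zero _
  field_simp at hm ⊢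
  exact (mul_right_cancel₀ (Nat.find_spec hex) (by linear_combination hm)).symm

/-- σ_pt(C; ℂ^ℕ) = {1/m : m ≥ 1}, with eigenvector Δe_m for 1/m. -/
theorem stmt7 :
    (∀ lam : ℂ,
      (∃ x : ℕ → ℂ, x ≠ 0 ∧ cesaroOp x = lam • x) ↔ ∃ m : ℕ, lam = 1 / ((m : ℂ) + 1)) ∧
      (∀ m : ℕ, deltaOp (Pi.single m 1) ≠ 0 ∧
        cesaroOp (deltaOp (Pi.single m 1)) =
          (1 / ((m : ℂ) + 1)) • deltaOp (Pi.single m 1)) := by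
  refine ⟨fun lam => ⟨fun ⟨x, hx, hC⟩ => exists_eq_one_div_of_cesaroOp_eq_smul hx hC, ?_⟩,
    fun m => ⟨deltaOp_single_ne_zero m, cesaroOp_deltaOp_single m⟩⟩
  rintro ⟨m, rfl⟩
  exact ⟨_, deltaOp_single_ne_zero m, cesaroOp_deltaOp_single m⟩
end

section
/- Let λ ∈ ℂ with λ ∉ {0} ∪ {1/n : n ≥ 1} and write a(λ) = Re(1/λ). Then for all N ≥ 1, ∏_{n=1}^{N} |1 − 1/(nλ)| ≤ exp(1/|λ| + 1/|λ|²) · N^{−a(λ)}. -/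
/-!
Since `1 + x ≤ exp x`, each factor satisfies `|1 - w| ≤ exp (-Re w + |w|² / 2)`. With `w = z / n`,
`z = 1 / λ`, the product is therefore at most `exp (-a H_N + |z|² / 2 · ∑ 1 / n²)`, where `H_N` is
the harmonic number. Now `∑ 1 / n² ≤ 2` and `log N ≤ H_N ≤ 1 + log N`, so `-a H_N ≤ |a| - a log N`
with `|a| ≤ |z| = 1 / |λ|`, and `exp (-a log N) = N ^ (-a)`.
-/

open Finset Real

lemma Complex.norm_one_sub_le_exp (w : ℂ) : ‖1 - w‖ ≤ Real.exp (-w.re + ‖w‖ ^ 2 / 2) := by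
  have hsq : ‖1 - w‖ ^ 2 = (-2 * w.re + ‖w‖ ^ 2) + 1 := by
    rw [Complex.sq_norm, Complex.sq_norm, Complex.normSq_apply, Complex.normSq_apply]
    simp only [Complex.sub_re, Complex.one_re, Complex.sub_im, Complex.one_im]
    ring
  have hexp : Real.exp (-2 * w.re + ‖w‖ ^ 2) = Real.exp (-w.re + ‖w‖ ^ 2 / 2) ^ 2 := by
    rw [← Real.exp_nat_mul]
    ring_nf
  have hsq_le : ‖1 - w‖ ^ 2 ≤ Real.exp (-w.re + ‖w‖ ^ 2 / 2) ^ 2 :=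
    hsq ▸ hexp ▸ Real.add_one_le_exp _
  exact (pow_le_pow_iff_left₀ (norm_nonneg _) (Real.exp_pos _).le two_ne_zero).mp hsq_le

lemma sum_Icc_inv_sq_le_two (N : ℕ) : ∑ n ∈ Icc 1 N, ((n : ℝ) ^ 2)⁻¹ ≤ 2 := by
  have hIoo : Ioo 0 (N + 1) = Icc 1 N := by ext; simp only [mem_Ioo, mem_Icc]; omega
  have := sum_Ioo_inv_sq_le (α := ℝ) 0 (N + 1)
  rwa [hIoo, Nat.cast_zero, zero_add, div_one] at this

lemma neg_mul_harmonic_le (a : ℝ) {N : ℕ} (hN : N ≠ 0) :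
    -a * harmonic N ≤ |a| - a * log N := by
  have hlog_le : log N ≤ harmonic N :=
    (log_le_log (by positivity) (Nat.cast_le.mpr N.le_succ)).trans (log_add_one_le_harmonic N)
  have hle_log : (harmonic N : ℝ) - log N ≤ 1 := by linarith [harmonic_le_one_add_log N]
  calc -a * harmonic N = -a * (harmonic N - log N) - a * log N := by ring
    _ ≤ |a| * (harmonic N - log N) - a * log N := by
      gcongr
      exact neg_le_abs a
    _ ≤ |a| * 1 - a * log N := by gcongr
    _ = |a| - a * log N := by ring

lemma prod_norm_one_sub_div_le (z : ℂ) (N : ℕ) :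
    ∏ n ∈ Icc 1 N, ‖1 - z / n‖ ≤
      exp (-z.re * harmonic N + ‖z‖ ^ 2 / 2 * ∑ n ∈ Icc 1 N, ((n : ℝ) ^ 2)⁻¹) := by
  have hexponent : -z.re * harmonic N + ‖z‖ ^ 2 / 2 * ∑ n ∈ Icc 1 N, ((n : ℝ) ^ 2)⁻¹ =
      ∑ n ∈ Icc 1 N, (-(z / n).re + ‖z / n‖ ^ 2 / 2) := by
    simp only [harmonic_eq_sum_Icc, Rat.cast_sum, Rat.cast_inv, Rat.cast_natCast, mul_sum,
      ← sum_add_distrib, Complex.div_natCast_re, norm_div, Complex.norm_natCast]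
    refine sum_congr rfl fun n _ => by ring
  rw [hexponent, exp_sum]
  exact prod_le_prod (fun _ _ => norm_nonneg _) fun n _ => Complex.norm_one_sub_le_exp _

theorem stmt9_general (lam : ℂ) :
    ∀ N : ℕ, 1 ≤ N →
      ∏ n ∈ Finset.Icc 1 N, ‖1 - 1 / ((n : ℂ) * lam)‖ ≤
        Real.exp (1 / ‖lam‖ + 1 / (‖lam‖) ^ 2) *
          (N : ℝ) ^ (-(1 / lam).re) := by
  intro N hN
  set z := 1 / lam
  have hz : ‖z‖ = 1 / ‖lam‖ := by simp [z]
  have hre : |z.re| ≤ ‖z‖ := Complex.abs_re_le_norm z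
  have hharmonic := neg_mul_harmonic_le z.re (Nat.one_le_iff_ne_zero.mp hN)
  have hsum_sq := mul_le_mul_of_nonneg_left (sum_Icc_inv_sq_le_two N) (by positivity : 0 ≤ ‖z‖ ^ 2 / 2)
  calc ∏ n ∈ Icc 1 N, ‖1 - 1 / ((n : ℂ) * lam)‖ = ∏ n ∈ Icc 1 N, ‖1 - z / n‖ :=
        prod_congr rfl fun n _ => by congr 2; ring
    _ ≤ _ := prod_norm_one_sub_div_le z N
    _ ≤ exp (‖z‖ + ‖z‖ ^ 2 + log N * -z.re) := exp_le_exp.mpr (by linarith)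
    _ = _ := by rw [rpow_def_of_pos (by exact_mod_cast hN), ← exp_add, hz, div_pow, one_pow]

/-- for λ ∉ {0} ∪ {1/n : n ≥ 1} and a(λ) = Re(1/λ),
∏_{n=1}^{N} |1 − 1/(nλ)| ≤ exp(1/|λ| + 1/|λ|²)·N^{−a(λ)} for all N ≥ 1. -/
theorem stmt9 (lam : ℂ) (h0 : lam ≠ 0)
    (hn : ∀ n : ℕ, 1 ≤ n → lam ≠ 1 / (n : ℂ)) :
    ∀ N : ℕ, 1 ≤ N →
      ∏ n ∈ Finset.Icc 1 N, ‖1 - 1 / ((n : ℂ) * lam)‖ ≤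
        Real.exp (1 / ‖lam‖ + 1 / (‖lam‖) ^ 2) *
          (N : ℝ) ^ (-(1 / lam).re) :=
  stmt9_general lam
end

section
/- Let μ ∈ ℂ \ ({0} ∪ {1/n : n ≥ 1}). Define the lower triangular matrix E_μ = (e_{nm}(μ)) by e_{nm}(μ) = 1/(n·∏_{k=m}^{n}(1 − 1/(μk))) for 1 ≤ m < n and e_{nm}(μ) = 0 otherwise, and the diagonal matrix D_μ with entries d_{nn}(μ) = 1/(1/n − μ). Then, as operators on ℂ^ℕ, (C − μI) ∘ (D_μ − μ^{−2} E_μ) = I and (D_μ − μ^{−2} E_μ) ∘ (C − μI) = I; i.e. (C − μI)⁻¹ = D_μ − (1/μ²) E_μ. -/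
/-- The Cesàro operator, 1-indexed. -/
noncomputable def cesaro1 (x : ℕ → ℂ) (n : ℕ) : ℂ :=
  (∑ i ∈ Finset.Icc 1 n, x i) / (n : ℂ)

/-- The diagonal operator D_μ with entries d_{nn}(μ) = 1/(1/n − μ). -/
noncomputable def Dmu (μ : ℂ) (x : ℕ → ℂ) (n : ℕ) : ℂ :=
  (1 / (1 / (n : ℂ) - μ)) * x n

/-- The lower triangular operator E_μ with entries
e_{nm}(μ) = 1/(n·∏_{k=m}^{n}(1 − 1/(μk))) for 1 ≤ m < n. -/
noncomputable def Emu (μ : ℂ) (x : ℕ → ℂ) (n : ℕ) : ℂ :=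
  ∑ m ∈ Finset.Ico 1 n,
    (1 / ((n : ℂ) * ∏ k ∈ Finset.Icc m n, (1 - 1 / (μ * (k : ℂ))))) * x m

/-- The candidate resolvent R_μ = D_μ − (1/μ²)E_μ. -/
noncomputable def Rmu (μ : ℂ) (x : ℕ → ℂ) (n : ℕ) : ℂ :=
  Dmu μ x n - (1 / μ ^ 2) * Emu μ x n

/-!
With a_k = 1 - 1/(μk), the sums n·(E_μ x)_n obey the first-order recurrence
a_{n+1}·(n+1)(E_μ x)_{n+1} = n(E_μ x)_n - μ(D_μ x)_n, which telescopes to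
∑_{i ≤ n} (R_μ x)_i = (D_μ x)_n - n(E_μ x)_n/μ; this is exactly (C - μI)R_μ = I.
Since C - μI is lower triangular with diagonal entries 1/n - μ ≠ 0, it is injective,
so the right inverse R_μ is also a left inverse.
-/

lemma one_sub_one_div_mul_ne_zero {K : Type*} [Field K] {μ z : K} (h : μ ≠ 1 / z) :
    1 - 1 / (μ * z) ≠ 0 := by
  rintro h'
  rw [sub_eq_zero, eq_comm, div_eq_one_iff_eq (by rintro h0; simp [h0] at h')] at h'
  have hz : z ≠ 0 := by rintro rfl; simp at h'
  exact h (by rw [eq_div_iff hz, h'])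

lemma natCast_mul_Emu (μ : ℂ) (x : ℕ → ℂ) (n : ℕ) :
    n * Emu μ x n =
      ∑ m ∈ Finset.Ico 1 n, x m / ∏ k ∈ Finset.Icc m n, (1 - 1 / (μ * (k : ℂ))) := by
  rw [Emu, Finset.mul_sum]
  refine Finset.sum_congr rfl fun m hm => ?_
  have hn : (n : ℂ) ≠ 0 := Nat.cast_ne_zero.mpr (by grind)
  field_simp

lemma Emu_succ {μ : ℂ} (hμ : μ ≠ 0) (x : ℕ → ℂ) {n : ℕ} (hn : 1 ≤ n)
    (ha : 1 - 1 / (μ * ((n + 1 : ℕ) : ℂ)) ≠ 0) :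
    (1 - 1 / (μ * ((n + 1 : ℕ) : ℂ))) * (((n + 1 : ℕ) : ℂ) * Emu μ x (n + 1)) =
      n * Emu μ x n - μ * Dmu μ x n := by
  have hsplit : ∀ m ≤ n, ∏ k ∈ Finset.Icc m (n + 1), (1 - 1 / (μ * (k : ℂ))) =
      (∏ k ∈ Finset.Icc m n, (1 - 1 / (μ * (k : ℂ)))) * (1 - 1 / (μ * ((n + 1 : ℕ) : ℂ))) :=
    fun m hm => Finset.prod_Icc_succ_top (by omega) _
  have hlast : (1 - 1 / (μ * ((n + 1 : ℕ) : ℂ))) *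
      (x n / ∏ k ∈ Finset.Icc n (n + 1), (1 - 1 / (μ * (k : ℂ)))) = -(μ * Dmu μ x n) := by
    have hn0 : (n : ℂ) ≠ 0 := Nat.cast_ne_zero.mpr (by omega)
    have han : 1 - 1 / (μ * n) = (1 / n - μ) / -μ := by field_simp; ring
    rw [hsplit n le_rfl, Finset.Icc_self, Finset.prod_singleton, ← div_div (x n),
      mul_div_cancel₀ _ ha, han, div_div_eq_mul_div, Dmu]
    ring
  rw [natCast_mul_Emu, natCast_mul_Emu, Finset.sum_Ico_succ_top hn, mul_add, Finset.mul_sum,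
    hlast, ← sub_eq_add_neg]
  congr 1
  refine Finset.sum_congr rfl fun m hm => ?_
  rw [hsplit m (by grind), ← div_div (x m), mul_div_cancel₀ _ ha]

lemma sum_Icc_Rmu {μ : ℂ} (hμ0 : μ ≠ 0) (hμ : ∀ n : ℕ, 1 ≤ n → μ ≠ 1 / (n : ℂ))
    (x : ℕ → ℂ) {n : ℕ} (hn : 1 ≤ n) :
    ∑ i ∈ Finset.Icc 1 n, Rmu μ x i = Dmu μ x n - n * Emu μ x n / μ := by
  induction n, hn using Nat.le_induction with
  | base => simp [Rmu, Emu]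
  | succ n hn ih =>
    have key := Emu_succ hμ0 x hn (one_sub_one_div_mul_ne_zero (hμ (n + 1) (by omega)))
    rw [Finset.sum_Icc_succ_top (by omega), ih, Rmu]
    push_cast at key ⊢
    linear_combination (norm := (field_simp; ring)) key / μ

lemma cesaro1_Rmu_sub {μ : ℂ} (hμ0 : μ ≠ 0) (hμ : ∀ n : ℕ, 1 ≤ n → μ ≠ 1 / (n : ℂ))
    (x : ℕ → ℂ) {n : ℕ} (hn : 1 ≤ n) :
    cesaro1 (Rmu μ x) n - μ * Rmu μ x n = x n := by
  have hn0 : (n : ℂ) ≠ 0 := Nat.cast_ne_zero.mpr (by omega)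
  have hd : 1 / (n : ℂ) - μ ≠ 0 := sub_ne_zero.mpr (hμ n hn).symm
  rw [cesaro1, sum_Icc_Rmu hμ0 hμ x hn, Rmu]
  calc _ = Dmu μ x n * (1 / n - μ) := by field_simp; ring
    _ = x n := by rw [Dmu, mul_right_comm, one_div_mul_cancel hd, one_mul]

lemma eq_of_cesaro1_sub_eq {μ : ℂ} (hμ : ∀ n : ℕ, 1 ≤ n → μ ≠ 1 / (n : ℂ))
    {y z : ℕ → ℂ}
    (h : ∀ n : ℕ, 1 ≤ n → cesaro1 y n - μ * y n = cesaro1 z n - μ * z n)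
    {n : ℕ} (hn : 1 ≤ n) : y n = z n := by
  suffices ∀ n : ℕ, ∀ i ∈ Finset.Icc 1 n, y i = z i from this n n (by simp [hn])
  intro n
  induction n with
  | zero => simp
  | succ n ih =>
    have hsum : ∑ i ∈ Finset.Icc 1 n, y i = ∑ i ∈ Finset.Icc 1 n, z i :=
      Finset.sum_congr rfl ih
    have hlast : y (n + 1) = z (n + 1) := by
      have hd : 1 / ((n + 1 : ℕ) : ℂ) - μ ≠ 0 :=
        sub_ne_zero.mpr (hμ (n + 1) (by omega)).symm
      have hstep := h (n + 1) (by omega)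
      rw [cesaro1, cesaro1, Finset.sum_Icc_succ_top (by omega),
        Finset.sum_Icc_succ_top (by omega), hsum] at hstep
      apply mul_right_cancel₀ hd
      linear_combination hstep
    intro i hi
    obtain hi | rfl : i ∈ Finset.Icc 1 n ∨ i = n + 1 := by grind
    exacts [ih i hi, hlast]

/-- (C − μI)⁻¹ = D_μ − (1/μ²)E_μ on ℂ^ℕ for μ ∉ {0} ∪ {1/n : n ≥ 1}. -/
theorem stmt14 (μ : ℂ) (h0 : μ ≠ 0) (hn : ∀ n : ℕ, 1 ≤ n → μ ≠ 1 / (n : ℂ)) :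
    ∀ x : ℕ → ℂ, ∀ n : ℕ, 1 ≤ n →
      (cesaro1 (Rmu μ x) n - μ * Rmu μ x n = x n) ∧
        (Rmu μ (fun k => cesaro1 x k - μ * x k) n = x n) := by
  intro x n h1
  have right_inv : ∀ (w : ℕ → ℂ) (k : ℕ), 1 ≤ k →
      cesaro1 (Rmu μ w) k - μ * Rmu μ w k = w k :=
    fun w k hk => cesaro1_Rmu_sub h0 hn w hk
  exact ⟨right_inv x n h1, eq_of_cesaro1_sub_eq hn (fun k hk => right_inv _ k hk) h1⟩
end

section
/- Define v_k(n) = (n+1)^{1/k} for k, n ≥ 1 (i.e. weights e^{α_n/k} with α_n = log(n+1)). Then for every k ≥ 1, with l = k+1, the quantity sup_{n≥1} [ (n+1)^{1/l}/n · ∑_{m=1}^{n} (m+1)^{−1/k} ] is finite. Consequently the Cesàro operator maps c₀(1/v_k)-type weighted spaces appropriately (continuity from the k-th to the (k+1)-th step). -/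
open Real Finset

lemma stmt18_step (δ : ℝ) (hδ0 : 0 < δ) (hδ1 : δ < 1) (m : ℕ) :
    (1 - δ) * ((m:ℝ)+1) ^ (-δ) ≤ ((m:ℝ)+1) ^ (1-δ) - (m:ℝ) ^ (1-δ) := by
  set p : ℝ := 1 - δ with hp
  have hp0 : 0 ≤ p := by simp [hp]; linarith
  have hp1 : p ≤ 1 := by simp [hp]; linarith
  have hm1 : (0:ℝ) < (m:ℝ) + 1 := by positivity
  set s : ℝ := -(1/((m:ℝ)+1)) with hs
  have hs1 : -1 ≤ s := by
    rw [hs, neg_le_neg_iff]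
    exact div_le_one_of_le₀ (by linarith) (by linarith)
  have hbern : (1 + s) ^ p ≤ 1 + p * s := rpow_one_add_le_one_add_mul_self hs1 hp0 hp1
  have h1s : 1 + s = (m:ℝ) / ((m:ℝ)+1) := by
    rw [hs]; field_simp; ring
  have hmeq : (m:ℝ) = ((m:ℝ)+1) * (1 + s) := by
    rw [h1s]; field_simp
  have hkey : (m:ℝ) ^ p ≤ ((m:ℝ)+1) ^ p * (1 + p * s) := by
    calc (m:ℝ) ^ p = (((m:ℝ)+1) * (1 + s)) ^ p := by rw [← hmeq]
      _ = ((m:ℝ)+1) ^ p * (1 + s) ^ p := by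
          rw [Real.mul_rpow hm1.le (by rw [h1s]; positivity)]
      _ ≤ ((m:ℝ)+1) ^ p * (1 + p * s) := by
          exact mul_le_mul_of_nonneg_left hbern (Real.rpow_nonneg hm1.le p)
  have hexp : ((m:ℝ)+1) ^ p * (1/((m:ℝ)+1)) = ((m:ℝ)+1) ^ (-δ) := by
    rw [one_div, ← Real.rpow_neg_one, ← Real.rpow_add hm1]
    congr 1
    rw [hp]; ring
  have : ((m:ℝ)+1) ^ p * (1 + p * s) = ((m:ℝ)+1) ^ p - p * ((m:ℝ)+1) ^ (-δ) := by
    rw [hs, ← hexp]; ring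
  rw [this] at hkey
  rw [hp] at *
  linarith
lemma stmt18_sum (δ : ℝ) (hδ0 : 0 < δ) (hδ1 : δ < 1) (n : ℕ) :
    ∑ m ∈ Finset.Icc 1 n, ((m : ℝ) + 1) ^ (-δ) ≤ ((n:ℝ)+1) ^ (1-δ) / (1-δ) := by
  have h1δ : 0 < 1 - δ := by linarith
  rw [le_div_iff₀ h1δ, mul_comm]
  calc (1-δ) * ∑ m ∈ Finset.Icc 1 n, ((m : ℝ) + 1) ^ (-δ)
      = ∑ m ∈ Finset.Icc 1 n, (1-δ) * ((m : ℝ) + 1) ^ (-δ) := by rw [Finset.mul_sum]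
    _ ≤ ∑ m ∈ Finset.Icc 1 n, (((m:ℝ)+1) ^ (1-δ) - (m:ℝ) ^ (1-δ)) :=
        Finset.sum_le_sum fun m _ => stmt18_step δ hδ0 hδ1 m
    _ = ((n:ℝ)+1) ^ (1-δ) - 1 := by
        induction n with
        | zero => simp
        | succ n ih =>
          rw [Finset.sum_Icc_succ_top (by omega), ih]
          push_cast
          ring
    _ ≤ ((n:ℝ)+1) ^ (1-δ) := by linarith

/-- with weights v_k(n) = (n+1)^{1/k} and l = k+1, the quantity
sup_{n≥1} (n+1)^{1/l}/n · ∑_{m=1}^{n} (m+1)^{−1/k} is finite for every k ≥ 1. -/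
theorem stmt18 (k : ℕ) (hk : 1 ≤ k) :
    ∃ C : ℝ, ∀ n : ℕ, 1 ≤ n →
      ((n : ℝ) + 1) ^ ((1 : ℝ) / ((k : ℝ) + 1)) / (n : ℝ) *
          ∑ m ∈ Finset.Icc 1 n, ((m : ℝ) + 1) ^ (-(1 : ℝ) / (k : ℝ)) ≤ C := by
  have hk' : (1:ℝ) ≤ (k:ℝ) := by exact_mod_cast hk
  set δ : ℝ := 1 / ((k:ℝ)+1) with hδ
  have hδ0 : 0 < δ := by positivity
  have hδ1 : δ < 1 := by
    rw [hδ, div_lt_one (by linarith)]; linarith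
  refine ⟨2 / (1-δ), fun n hn => ?_⟩
  have hn1 : (1:ℝ) ≤ (n:ℝ) := by exact_mod_cast hn
  have hn0 : (0:ℝ) < (n:ℝ) := by linarith
  have hsum : ∑ m ∈ Finset.Icc 1 n, ((m : ℝ) + 1) ^ (-(1 : ℝ) / (k : ℝ))
      ≤ ((n:ℝ)+1) ^ (1-δ) / (1-δ) := by
    refine le_trans (Finset.sum_le_sum fun m _ => ?_) (stmt18_sum δ hδ0 hδ1 n)
    apply Real.rpow_le_rpow_of_exponent_le (by linarith)
    rw [hδ, neg_div, neg_le_neg_iff]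
    apply div_le_div_of_nonneg_left one_pos.le (by linarith) (by linarith)
  have h1δ : 0 < 1 - δ := by linarith
  have hpos : 0 ≤ ((n:ℝ)+1) ^ ((1:ℝ)/((k:ℝ)+1)) / (n:ℝ) := by positivity
  calc ((n : ℝ) + 1) ^ ((1 : ℝ) / ((k : ℝ) + 1)) / (n : ℝ) *
          ∑ m ∈ Finset.Icc 1 n, ((m : ℝ) + 1) ^ (-(1 : ℝ) / (k : ℝ))
      ≤ ((n : ℝ) + 1) ^ δ / (n : ℝ) * (((n:ℝ)+1) ^ (1-δ) / (1-δ)) :=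
        mul_le_mul_of_nonneg_left hsum hpos
    _ = ((n:ℝ)+1) / ((n:ℝ) * (1-δ)) := by
        rw [div_mul_div_comm, ← Real.rpow_add (by linarith)]
        norm_num
    _ ≤ 2 / (1-δ) := by
        rw [div_le_div_iff₀ (by positivity) h1δ]
        nlinarith [mul_nonneg (by linarith : (0:ℝ) ≤ (n:ℝ) - 1) h1δ.le]
end
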